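/- Let H be a positive integer, w ∈ ℝ^H, β ∈ ℝ, and b ∈ ℝ^H with b_1 ≤ b_2 ≤ ⋯ ≤ b_H. Then the function N : ℝ → ℝ defined by N(x) = Σ_{h=1}^H w_h max(x − b_h, 0) + β is K-Lipschitz with K = max_{J ∈ {1, …, H}} |Σ_{j=1}^J w_j|, i.e., |N(x) − N(y)| ≤ K |x − y| for all x, y ∈ ℝ. -/
import Mathlib

/-- Partial sums over `Finset.Iic` in `Fin H` equal range sums. -/
lemma sum_Iic_fin_eq {H : ℕ} (w : Fin H → ℝ) (J : Fin H) :
    ∑ j ∈ Finset.Iic J, w j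
      = ∑ j ∈ Finset.range (J.1 + 1), if h : j < H then w ⟨j, h⟩ else 0 := by
  refine Finset.sum_nbij' (fun i => (i : ℕ)) (fun i => if h : i < H then ⟨i, h⟩ else J)
    ?_ ?_ ?_ ?_ ?_
  · intro a ha
    simp only [Finset.mem_Iic, Finset.mem_range] at *
    omega
  · intro a ha
    simp only [Finset.mem_Iic, Finset.mem_range] at *
    have hlt : a < H := lt_of_lt_of_le ha (by omega)
    simp [hlt, Fin.le_def]
    omega
  · intro a _; simp
  · intro a ha
    simp only [Finset.mem_range] at ha
    have hlt : a < H := lt_of_lt_of_le ha (by omega)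
    simp [hlt]
  · intro a ha
    simp only [Finset.mem_Iic] at ha
    simp [a.isLt]

lemma relu_diff_nonneg {x y c : ℝ} (h : y ≤ x) :
    0 ≤ max (x - c) 0 - max (y - c) 0 := by
  simp only [max_def]; split_ifs <;> linarith

lemma relu_diff_le {x y c : ℝ} (h : y ≤ x) :
    max (x - c) 0 - max (y - c) 0 ≤ x - y := by
  simp only [max_def]; split_ifs <;> linarith

lemma relu_diff_anti {x y c₁ c₂ : ℝ} (h : y ≤ x) (hc : c₁ ≤ c₂) :
    max (x - c₂) 0 - max (y - c₂) 0 ≤ max (x - c₁) 0 - max (y - c₁) 0 := by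
  simp only [max_def]; split_ifs <;> linarith

/-- The ReLU network `N(x) = Σ_h w_h ReLU(x - b_h) + β` with nondecreasing
biases is `K`-Lipschitz with `K = max_J |Σ_{j ≤ J} w_j|`. -/
theorem stmt_15 (H : ℕ) (hH : 0 < H) (w : Fin H → ℝ) (β : ℝ)
    (b : Fin H → ℝ) (hb : Monotone b) :
    ∀ x y : ℝ,
      |((∑ h : Fin H, w h * max (x - b h) 0) + β) -
          ((∑ h : Fin H, w h * max (y - b h) 0) + β)| ≤
        (Finset.univ.sup' ⟨⟨0, hH⟩, Finset.mem_univ _⟩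
            fun J : Fin H => |∑ j ∈ Finset.Iic J, w j|) *
          |x - y| := by
  -- reduce to the case y ≤ x by symmetry
  set K := Finset.univ.sup' ⟨⟨0, hH⟩, Finset.mem_univ _⟩
      fun J : Fin H => |∑ j ∈ Finset.Iic J, w j| with hK
  have key : ∀ x y : ℝ, y ≤ x →
      |((∑ h : Fin H, w h * max (x - b h) 0) + β) -
        ((∑ h : Fin H, w h * max (y - b h) 0) + β)| ≤ K * |x - y| := by
    intro x y hxy
    -- extend weights and differences to ℕ
    set W : ℕ → ℝ := fun j => if h : j < H then w ⟨j, h⟩ else 0 with hW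
    set d : ℕ → ℝ := fun j =>
      if h : j < H then max (x - b ⟨j, h⟩) 0 - max (y - b ⟨j, h⟩) 0 else 0 with hd
    have hd0 : ∀ j, 0 ≤ d j := by
      intro j; simp only [hd]; split_ifs with h
      · exact relu_diff_nonneg hxy
      · exact le_refl 0
    have hdle : ∀ j, d j ≤ x - y := by
      intro j; simp only [hd]; split_ifs with h
      · exact relu_diff_le hxy
      · linarith
    have hdanti : ∀ i j : ℕ, i ≤ j → d j ≤ d i := by
      intro i j hij
      simp only [hd]
      split_ifs with h1 h2 h2
      · exact relu_diff_anti hxy (hb (by exact_mod_cast hij))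
      · omega
      · exact relu_diff_nonneg hxy
      · exact le_refl 0
    -- partial sums bounded by K
    have hS : ∀ i, i < H → |∑ j ∈ Finset.range (i + 1), W j| ≤ K := by
      intro i hi
      have := Finset.le_sup' (f := fun J : Fin H => |∑ j ∈ Finset.Iic J, w j|)
        (Finset.mem_univ (⟨i, hi⟩ : Fin H))
      rw [sum_Iic_fin_eq w ⟨i, hi⟩] at this
      exact this
    have hK0 : 0 ≤ K := le_trans (abs_nonneg _) (hS 0 hH)
    -- rewrite the difference as ∑ d i * W i over range H
    have hsum : ((∑ h : Fin H, w h * max (x - b h) 0) + β) -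
        ((∑ h : Fin H, w h * max (y - b h) 0) + β)
        = ∑ i ∈ Finset.range H, d i • W i := by
      rw [Finset.sum_range fun i => d i • W i]
      have he : ∀ h : Fin H, d h.1 • W h.1
          = w h * max (x - b h) 0 - w h * max (y - b h) 0 := by
        intro h
        simp only [hd, hW, h.isLt, dif_pos, smul_eq_mul, Fin.eta]
        ring
      simp only [he, Finset.sum_sub_distrib]
      ring
    rw [hsum, Finset.sum_range_by_parts d W H]
    have habs : ∀ i, i < H - 1 →
        |(d (i + 1) - d i) • ∑ j ∈ Finset.range (i + 1), W j|
          ≤ (d i - d (i + 1)) * K := by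
      intro i hi
      rw [smul_eq_mul, abs_mul, abs_sub_comm, abs_of_nonneg (by linarith [hdanti i (i+1) (by omega)])]
      exact mul_le_mul_of_nonneg_left (hS i (by omega)) (by linarith [hdanti i (i+1) (by omega)])
    calc |d (H - 1) • ∑ i ∈ Finset.range H, W i -
            ∑ i ∈ Finset.range (H - 1), (d (i + 1) - d i) • ∑ j ∈ Finset.range (i + 1), W j|
        ≤ |d (H - 1) • ∑ i ∈ Finset.range H, W i| +
            |∑ i ∈ Finset.range (H - 1), (d (i + 1) - d i) • ∑ j ∈ Finset.range (i + 1), W j| :=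
          abs_sub _ _
      _ ≤ d (H - 1) * K + ∑ i ∈ Finset.range (H - 1), (d i - d (i + 1)) * K := by
          gcongr
          · rw [smul_eq_mul, abs_mul, abs_of_nonneg (hd0 _)]
            have hH1 : H - 1 + 1 = H := by omega
            have := hS (H - 1) (by omega)
            rw [hH1] at this
            exact mul_le_mul_of_nonneg_left this (hd0 _)
          · calc |∑ i ∈ Finset.range (H - 1), (d (i + 1) - d i) • ∑ j ∈ Finset.range (i + 1), W j|
                ≤ ∑ i ∈ Finset.range (H - 1),
                    |(d (i + 1) - d i) • ∑ j ∈ Finset.range (i + 1), W j| :=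
                  Finset.abs_sum_le_sum_abs _ _
              _ ≤ ∑ i ∈ Finset.range (H - 1), (d i - d (i + 1)) * K :=
                  Finset.sum_le_sum fun i hi => habs i (Finset.mem_range.mp hi)
      _ = d 0 * K := by
          rw [← Finset.sum_mul, Finset.sum_range_sub' d (H - 1)]
          ring
      _ ≤ K * |x - y| := by
          rw [abs_of_nonneg (by linarith : (0:ℝ) ≤ x - y)]
          calc d 0 * K ≤ (x - y) * K := mul_le_mul_of_nonneg_right (hdle 0) hK0
            _ = K * (x - y) := mul_comm _ _
  intro x y
  rcases le_total y x with h | h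
  · exact key x y h
  · rw [abs_sub_comm, abs_sub_comm x y]
    exact key y x h
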